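/- arXiv:math/9903052 — 3 statements merged into one kernel-verified Lean document; each statement's English description precedes it below -/
import Mathlib

section
/- In Cl(𝔤), for all indices a,b one has g_a g_b − g_b g_a = Σ_c f_{abc} g_c; that is, the map e_a ↦ g_a is a Lie algebra homomorphism from 𝔤 into Cl(𝔤) (with the commutator bracket). -/
/-!
Let `A v` be the matrix of `ad v` in the orthonormal basis `e`; invariance of the inner product
makes it skew-symmetric, and `f a r s = A (e a) s r`, so `g_a = ½ q (A (e a))` where
`q M = ∑ M r s x_r x_s`. The Clifford relations give `[q M, x_c] = ∑_t (M - Mᵀ) t c x_t`, hence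
`ad g_a` acts on the generators through the matrix `A (e a)`. Since `ad g_a` is a derivation,
`[g_a, q M] = q (A (e a) * M + M * A (e a)ᵀ)`, and with `M = A (e b)` this is
`q [A (e a), A (e b)] = q (A ⁅e a, e b⁆)`. Expanding `⁅e a, e b⁆ = ∑_c f a b c • e c` finishes.
-/

open scoped Matrix

attribute [local instance 100] LieRing.ofAssociativeRing

section QuadraticElement

variable {R A ι : Type*} [CommRing R] [Ring A] [Algebra R A] [Fintype ι]

def quadraticElement (x : ι → A) : Matrix ι ι R →ₗ[R] A where
  toFun M := ∑ r, ∑ s, M r s • (x r * x s)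
  map_add' M N := by simp only [Matrix.add_apply, add_smul, Finset.sum_add_distrib]
  map_smul' c M := by
    simp only [Matrix.smul_apply, smul_eq_mul, mul_smul, Finset.smul_sum, RingHom.id_apply]

theorem quadraticElement_apply (x : ι → A) (M : Matrix ι ι R) :
    quadraticElement x M = ∑ r, ∑ s, M r s • (x r * x s) := rfl

theorem commutator_quadraticElement_of_commutator_eq (x : ι → A) {D : A} {N : Matrix ι ι R}
    (hD : ∀ r, D * x r - x r * D = ∑ t, N t r • x t) (M : Matrix ι ι R) :
    D * quadraticElement x M - quadraticElement x M * D
      = quadraticElement x (N * M + M * Nᵀ) := by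
  have leibniz : ∀ r s, D * (x r * x s) - x r * x s * D
      = (D * x r - x r * D) * x s + x r * (D * x s - x s * D) := fun r s => by noncomm_ring
  simp only [quadraticElement_apply, Finset.mul_sum, Finset.sum_mul, ← Finset.sum_sub_distrib,
    mul_smul_comm, smul_mul_assoc, ← smul_sub, leibniz, hD, smul_add, Finset.smul_sum, smul_smul,
    Finset.sum_add_distrib, Matrix.add_apply, Matrix.mul_apply, Matrix.transpose_apply, add_smul,
    Finset.sum_smul]
  congr 1
  · rw [Finset.sum_comm_cycle]
    refine Finset.sum_congr rfl fun u _ => Finset.sum_comm.trans ?_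
    simp only [mul_comm]
  · exact Finset.sum_congr rfl fun u _ => Finset.sum_comm

theorem commutator_quadraticElement_of_anticomm {x : ι → A} [DecidableEq ι]
    (hx : ∀ r s, x r * x s + x s * x r = if r = s then 1 else 0) (M : Matrix ι ι R) (c : ι) :
    quadraticElement x M * x c - x c * quadraticElement x M = ∑ t, (M - Mᵀ) t c • x t := by
  have triple : ∀ r s, x r * x s * x c - x c * x r * x s
      = (if s = c then x r else 0) - (if r = c then x s else 0) := fun r s => by
    calc x r * x s * x c - x c * x r * x s
        = x r * (x s * x c + x c * x s) - (x r * x c + x c * x r) * x s := by noncomm_ring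
      _ = _ := by rw [hx, hx]; split_ifs <;> simp
  simp only [quadraticElement_apply, Finset.mul_sum, Finset.sum_mul, ← Finset.sum_sub_distrib,
    mul_smul_comm, smul_mul_assoc, ← smul_sub, ← mul_assoc, triple]
  simp only [smul_sub, Finset.sum_sub_distrib, smul_ite, smul_zero, Finset.sum_ite_eq',
    Finset.mem_univ, if_true, Matrix.sub_apply, Matrix.transpose_apply, sub_smul]
  rw [Finset.sum_comm]
  simp only [Finset.sum_ite_eq', Finset.mem_univ, if_true]

end QuadraticElement

namespace CliffordAlgebra

variable {K M κ : Type*} [Field K] [NeZero (2 : K)] [AddCommGroup M] [Module K M]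
  {B : LinearMap.BilinForm K M} {Q : QuadraticForm K M} {e : κ → M} [DecidableEq κ]

theorem ι_mul_ι_add_swap_of_orthonormal (hsymm : ∀ v w, B v w = B w v)
    (hQ : ∀ v, Q v = 1 / 2 * B v v) (he : ∀ a b, B (e a) (e b) = if a = b then 1 else 0)
    (r s : κ) :
    ι Q (e r) * ι Q (e s) + ι Q (e s) * ι Q (e r) = if r = s then 1 else 0 := by
  have hpolar : QuadraticMap.polar Q (e r) (e s) = B (e r) (e s) := by
    simp only [QuadraticMap.polar, hQ, map_add, LinearMap.add_apply, hsymm (e s) (e r)]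
    field_simp
    ring
  rw [ι_mul_ι_add_swap, hpolar, he]
  split_ifs <;> simp

end CliffordAlgebra

theorem Module.Basis.repr_apply_eq_of_orthonormal {R L ι : Type*} [CommRing R] [AddCommGroup L]
    [Module R L] {B : LinearMap.BilinForm R L} {e : Module.Basis ι R L} [DecidableEq ι]
    (he : ∀ a b, B (e a) (e b) = if a = b then 1 else 0) (v : L) (c : ι) :
    e.repr v c = B v (e c) := by
  have : Finsupp.lapply c ∘ₗ e.repr.toLinearMap = B.flip (e c) :=
    e.ext fun a => by simp [he, Finsupp.single_apply]
  exact LinearMap.congr_fun this v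

section AdMatrix

variable {R L ι : Type*} [CommRing R] [LieRing L] [LieAlgebra R L] [Fintype ι] [DecidableEq ι]
  (e : Module.Basis ι R L)

theorem toMatrix_ad_lie (v w : L) :
    LinearMap.toMatrix e e (LieAlgebra.ad R L ⁅v, w⁆)
      = LinearMap.toMatrix e e (LieAlgebra.ad R L v) * LinearMap.toMatrix e e (LieAlgebra.ad R L w)
        - LinearMap.toMatrix e e (LieAlgebra.ad R L w)
          * LinearMap.toMatrix e e (LieAlgebra.ad R L v) := by
  rw [LieHom.map_lie, LieRing.of_associative_ring_bracket, map_sub, LinearMap.toMatrix_mul,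
    LinearMap.toMatrix_mul]

variable {B : LinearMap.BilinForm R L}

theorem toMatrix_ad_apply_of_orthonormal (he : ∀ a b, B (e a) (e b) = if a = b then 1 else 0)
    (v : L) (r s : ι) :
    LinearMap.toMatrix e e (LieAlgebra.ad R L v) s r = B ⁅v, e r⁆ (e s) := by
  rw [LinearMap.toMatrix_apply, LieAlgebra.ad_apply, e.repr_apply_eq_of_orthonormal he]

theorem transpose_toMatrix_ad_of_orthonormal
    (he : ∀ a b, B (e a) (e b) = if a = b then 1 else 0) (hsymm : ∀ v w, B v w = B w v)
    (hinv : ∀ v w z : L, B ⁅v, w⁆ z + B w ⁅v, z⁆ = 0) (v : L) :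
    (LinearMap.toMatrix e e (LieAlgebra.ad R L v))ᵀ
      = -LinearMap.toMatrix e e (LieAlgebra.ad R L v) := by
  ext r s
  rw [Matrix.transpose_apply, Matrix.neg_apply, toMatrix_ad_apply_of_orthonormal e he,
    toMatrix_ad_apply_of_orthonormal e he, eq_neg_iff_add_eq_zero, hsymm ⁅v, e r⁆, add_comm, hinv]

end AdMatrix

/-- In `Cl(𝔤)`, the map `e_a ↦ g_a` is a Lie algebra homomorphism:
`g_a g_b − g_b g_a = ∑_c f_{abc} g_c`. -/
theorem gCl_commutator
    {n : ℕ} {g : Type*} [LieRing g] [LieAlgebra ℝ g]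
    -- the ad-invariant inner product, as a symmetric bilinear form
    (ip : LinearMap.BilinForm ℝ g)
    (ip_symm : ∀ v w : g, ip v w = ip w v)
    (ip_inv : ∀ v w z : g, ip ⁅v, w⁆ z + ip w ⁅v, z⁆ = 0)
    -- an orthonormal basis
    (e : Module.Basis (Fin n) ℝ g)
    (he : ∀ a b, ip (e a) (e b) = if a = b then (1 : ℝ) else 0)
    -- the quadratic form Q(v) = ½⟨v,v⟩ and its Clifford algebra
    (Q : QuadraticForm ℝ g)
    (hQ : ∀ v, Q v = (1 / 2 : ℝ) * ip v v)
    -- structure constants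
    (f : Fin n → Fin n → Fin n → ℝ)
    (hf : ∀ a b c, f a b c = ip ⁅e a, e b⁆ (e c))
    -- the Clifford generators
    (x : Fin n → CliffordAlgebra Q)
    (hx : ∀ a, x a = CliffordAlgebra.ι Q (e a))
    -- the elements g_a = -½ ∑ f_{ars} x_r x_s
    (gc : Fin n → CliffordAlgebra Q)
    (hgc : ∀ a, gc a = (-(1 / 2 : ℝ)) • ∑ r, ∑ s, f a r s • (x r * x s))
    :
    ∀ a b, gc a * gc b - gc b * gc a = ∑ c, f a b c • gc c := by
  let A : g →ₗ[ℝ] Matrix (Fin n) (Fin n) ℝ :=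
    (LinearMap.toMatrix e e).toLinearMap ∘ₗ (LieAlgebra.ad ℝ g : g →ₗ[ℝ] Module.End ℝ g)
  have hAlie : ∀ v w, A ⁅v, w⁆ = A v * A w - A w * A v := toMatrix_ad_lie e
  have hskew : ∀ v, (A v)ᵀ = -A v := transpose_toMatrix_ad_of_orthonormal e he ip_symm ip_inv
  have hanti : ∀ r s, x r * x s + x s * x r = if r = s then 1 else 0 := fun r s => by
    simpa only [hx] using CliffordAlgebra.ι_mul_ι_add_swap_of_orthonormal ip_symm hQ he r s
  have hgc_eq : ∀ c, gc c = quadraticElement x ((1 / 2 : ℝ) • A (e c)) := by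
    intro c
    have hf_eq : (fun r s => f c r s) = (A (e c))ᵀ := by
      ext r s
      simp [A, toMatrix_ad_apply_of_orthonormal e he, hf]
    rw [hgc, ← quadraticElement_apply x (fun r s => f c r s), hf_eq, hskew, ← map_smul,
      neg_smul_neg]
  have hgx : ∀ c r, gc c * x r - x r * gc c = ∑ t, A (e c) t r • x t := by
    intro c r
    rw [hgc_eq, commutator_quadraticElement_of_anticomm hanti, Matrix.transpose_smul, hskew,
      smul_neg, sub_neg_eq_add, ← two_smul ℝ, smul_smul]
    norm_num
  have hlie : ∀ a b, ⁅e a, e b⁆ = ∑ c, f a b c • e c := fun a b => by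
    simp only [hf, ← e.repr_apply_eq_of_orthonormal he, e.sum_repr]
  intro a b
  calc gc a * gc b - gc b * gc a
      = quadraticElement x ((1 / 2 : ℝ) • (A (e a) * A (e b) + A (e b) * (A (e a))ᵀ)) := by
        rw [hgc_eq b, commutator_quadraticElement_of_commutator_eq x (hgx a), Matrix.mul_smul,
          Matrix.smul_mul, ← smul_add]
    _ = quadraticElement x ((1 / 2 : ℝ) • A ⁅e a, e b⁆) := by
        rw [hskew, hAlie, mul_neg, ← sub_eq_add_neg]
    _ = ∑ c, f a b c • gc c := by
        simp only [hlie, hgc_eq, map_sum, map_smul, Finset.smul_sum, smul_comm (f a b _)]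
end

section
/- In 𝒲 = U(𝔤) ⊗ Cl(𝔤), the element 𝔇 = Σ_a u_a ⊗ x_a + 1 ⊗ γ satisfies 𝔇² = ½ Σ_a (u_a u_a) ⊗ 1 − (1/48)·(Σ_{a,b,c} f_{abc}²)·(1 ⊗ 1). -/
/-!
Write `g_a = -½ ∑ f_ars x_r x_s`, so that `γ = ⅓ ∑ x_a g_a`. The Clifford relations give
`[g_a, x_b] = ∑ f_abc x_c` and `x_a γ + γ x_a = g_a`; with the Jacobi identity also
`[g_a, g_b] = ∑ f_abc g_c`, hence `[g_a, γ] = 0`.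

In `𝔇²` the cross terms `∑ u_a ⊗ (x_a γ + γ x_a) = ∑ u_a ⊗ g_a` cancel the antisymmetric half
`½ ∑ [u_a, u_b] ⊗ x_a x_b = -∑ u_a ⊗ g_a` of `(∑ u_a ⊗ x_a)²`, leaving `½ ∑ u_a² ⊗ 1 + 1 ⊗ γ²`.

Finally `γ²` is a scalar: expanding one factor of `γ γ` as `⅓ ∑ x_a g_a` and using `[g_a, γ] = 0`
gives `6γ² = ∑ g_a²`, while anticommuting `γ` through each `x_p x_q x_r` of the other factor gives
`2γ² = ∑ g_a² + (1/12) ∑ f_abc²`. Hence `γ² = -(1/48) ∑ f_abc²`.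
-/

open scoped TensorProduct
open Finset

theorem cyclic_of_antisymm {ι R : Type*} [InvolutiveNeg R] {f : ι → ι → ι → R}
    (hf₁ : ∀ a b c, f b a c = -f a b c) (hf₂ : ∀ a b c, f a c b = -f a b c) (a b c : ι) :
    f b c a = f a b c := by
  rw [hf₂, hf₁, neg_neg]

section

-- Local to this section: as an instance it would also change the `Module` instances found for
-- `U(𝔤) ⊗ Cl(𝔤)` in the statement of `dirac_square`.
attribute [local instance] LieRing.ofAssociativeRing

theorem Ring.lie_mul {A : Type*} [Ring A] (a b c : A) :
    ⁅a, b * c⁆ = ⁅a, b⁆ * c + b * ⁅a, c⁆ := by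
  simp only [Ring.lie_def]
  noncomm_ring

theorem lie_mul_mul_of_anticomm {ι A : Type*} [Ring A] [DecidableEq ι] {x : ι → A}
    (hx : ∀ a b, x a * x b + x b * x a = if a = b then 1 else 0) (r s b : ι) :
    ⁅x r * x s, x b⁆ = (if s = b then x r else 0) - (if r = b then x s else 0) := by
  have hs : x s * x b = (if s = b then 1 else 0) - x b * x s := eq_sub_of_add_eq (hx s b)
  have hr : x b * x r = (if r = b then 1 else 0) - x r * x b := by
    rw [eq_sub_iff_add_eq, add_comm, hx]
  calc ⁅x r * x s, x b⁆ = x r * (x s * x b) - x b * x r * x s := by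
        rw [Ring.lie_def]
        noncomm_ring
    _ = _ := by
        rw [hs, hr]
        split_ifs <;> noncomm_ring

section Clifford

variable {R A ι : Type*} [CommRing R] [Ring A] [Algebra R A] [Fintype ι]
  (f : ι → ι → ι → R) (x : ι → A)

-- `structureBivector f x a = -2 g_a` and `structureTrivector f x = -6 γ`: these integral multiples
-- keep the Clifford computations valid over any commutative ring.
def structureBivector (a : ι) : A := ∑ r, ∑ s, f a r s • (x r * x s)

def structureTrivector : A := ∑ a, ∑ b, ∑ c, f a b c • (x a * x b * x c)

variable {x}

theorem sum_mul_structureBivector :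
    ∑ a, x a * structureBivector f x a = structureTrivector f x := by
  simp only [structureBivector, structureTrivector, mul_sum, mul_smul_comm, mul_assoc]

variable [DecidableEq ι] (hx : ∀ a b, x a * x b + x b * x a = if a = b then 1 else 0)

include hx

theorem two_smul_sum_smul_mul_self (g : ι → R) :
    (2 : R) • ((∑ r, g r • x r) * (∑ r, g r • x r)) = (∑ r, g r ^ 2) • (1 : A) := by
  have hsymm : (∑ r, g r • x r) * (∑ r, g r • x r) = ∑ r, ∑ s, (g r * g s) • (x s * x r) := by
    rw [sum_mul_sum, sum_comm]
    simp only [smul_mul_smul_comm, mul_comm]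
  calc (2 : R) • ((∑ r, g r • x r) * (∑ r, g r • x r))
      = ∑ r, ∑ s, (g r * g s) • (x r * x s + x s * x r) := by
        rw [two_smul]
        nth_rw 2 [hsymm]
        simp only [sum_mul_sum, smul_mul_smul_comm, smul_add, sum_add_distrib]
    _ = (∑ r, g r ^ 2) • (1 : A) := by
        simp only [hx, smul_ite, smul_zero, sum_ite_eq, mem_univ, if_true, sum_smul, sq]

theorem lie_structureBivector (hf₂ : ∀ a b c, f a c b = -f a b c) (a b : ι) :
    ⁅structureBivector f x a, x b⁆ = (-2 : R) • ∑ c, f a b c • x c := by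
  simp only [structureBivector, sum_lie, smul_lie, lie_mul_mul_of_anticomm hx, smul_sub,
    sum_sub_distrib, smul_ite, smul_zero, sum_ite_irrel, sum_const_zero, sum_ite_eq',
    mem_univ, if_true, hf₂ a b, neg_smul, sum_neg_distrib]
  module

theorem mul_structureTrivector_add_structureTrivector_mul (hf₁ : ∀ a b c, f b a c = -f a b c)
    (hf₂ : ∀ a b c, f a c b = -f a b c) (a : ι) :
    x a * structureTrivector f x + structureTrivector f x * x a
      = (3 : R) • structureBivector f x a := by
  have hterm : ∀ b, x a * (x b * structureBivector f x b) + x b * structureBivector f x b * x a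
      = (x a * x b + x b * x a) * structureBivector f x b
        + x b * ⁅structureBivector f x b, x a⁆ := by
    intro b
    rw [Ring.lie_def]
    noncomm_ring
  have hvec : ∑ b, x b * ∑ c, f a b c • x c = structureBivector f x a := by
    simp only [structureBivector, mul_sum, mul_smul_comm]
  rw [← sum_mul_structureBivector, mul_sum, sum_mul, ← sum_add_distrib]
  simp only [hterm, hx, lie_structureBivector f hx hf₂, ite_mul, one_mul, zero_mul,
    sum_add_distrib, sum_ite_eq, mem_univ, if_true, mul_smul_comm, ← smul_sum, hf₁ a, neg_smul,
    sum_neg_distrib, smul_neg, neg_neg, hvec]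
  module

theorem lie_structureBivector_mul_mul (hf₂ : ∀ a b c, f a c b = -f a b c) (a r s : ι) :
    ⁅structureBivector f x a, x r * x s⁆
      = (-2 : R) • ∑ c, (f a r c • (x c * x s) + f a s c • (x r * x c)) := by
  rw [Ring.lie_mul, lie_structureBivector f hx hf₂, lie_structureBivector f hx hf₂, smul_mul_assoc,
    mul_smul_comm, ← smul_add, sum_mul, mul_sum, ← sum_add_distrib]
  simp only [smul_mul_assoc, mul_smul_comm]

theorem lie_structureBivector_structureBivector (hf₂ : ∀ a b c, f a c b = -f a b c)
    (hjac : ∀ a b c d, ∑ k, f b c k * f a k d = ∑ k, (f a b k * f k c d + f a c k * f b k d))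
    (a b : ι) :
    ⁅structureBivector f x a, structureBivector f x b⁆
      = (-2 : R) • ∑ c, f a b c • structureBivector f x c := by
  have hcoeff : ∀ r s, ∑ k, (f b k s * f a k r + f b r k * f a k s) = ∑ k, f a b k * f k r s := by
    intro r s
    simp only [sum_add_distrib, hjac a b r s, hf₂ a r, neg_mul, sum_neg_distrib,
      mul_comm (f b _ s)]
    ring
  calc ⁅structureBivector f x a, structureBivector f x b⁆
      = (-2 : R) • ((∑ r, ∑ s, ∑ c, (f b r s * f a r c) • (x c * x s))
          + ∑ r, ∑ s, ∑ c, (f b r s * f a s c) • (x r * x c)) := by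
        conv_lhs => arg 2; rw [structureBivector]
        simp only [lie_sum, lie_smul (R := R) (L := A) (M := A),
          lie_structureBivector_mul_mul f hx hf₂, smul_sum, smul_add, smul_smul, sum_add_distrib,
          mul_left_comm (f b _ _)]
    _ = (-2 : R) • ∑ r, ∑ s, (∑ k, (f b k s * f a k r + f b r k * f a k s)) • (x r * x s) := by
        rw [sum_comm_cycle]
        simp only [sum_add_distrib, add_smul, sum_smul]
        congr 2 <;> exact sum_congr rfl fun _ _ => sum_comm
    _ = (-2 : R) • ∑ c, f a b c • structureBivector f x c := by
        simp only [hcoeff, structureBivector, sum_smul, smul_sum, smul_smul]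
        rw [sum_comm_cycle]

theorem lie_structureBivector_structureTrivector (hf₂ : ∀ a b c, f a c b = -f a b c)
    (hjac : ∀ a b c d, ∑ k, f b c k * f a k d = ∑ k, (f a b k * f k c d + f a c k * f b k d))
    (a : ι) : ⁅structureBivector f x a, structureTrivector f x⁆ = 0 := by
  have hswap : ∑ b, ∑ c, f a b c • (x c * structureBivector f x b)
      = -∑ b, ∑ c, f a b c • (x b * structureBivector f x c) := by
    rw [sum_comm, ← sum_neg_distrib]
    exact sum_congr rfl fun b _ => by
      rw [← sum_neg_distrib]
      exact sum_congr rfl fun c _ => by rw [hf₂, neg_smul]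
  rw [← sum_mul_structureBivector, lie_sum]
  simp only [Ring.lie_mul, lie_structureBivector f hx hf₂,
    lie_structureBivector_structureBivector f hx hf₂ hjac, smul_mul_assoc, mul_smul_comm, sum_mul,
    mul_sum, sum_add_distrib, ← smul_sum, hswap, ← smul_add, neg_add_cancel, smul_zero]

theorem two_smul_structureTrivector_mul_self_eq_three_smul (hf₁ : ∀ a b c, f b a c = -f a b c)
    (hf₂ : ∀ a b c, f a c b = -f a b c)
    (hjac : ∀ a b c d, ∑ k, f b c k * f a k d = ∑ k, (f a b k * f k c d + f a c k * f b k d)) :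
    (2 : R) • (structureTrivector f x * structureTrivector f x)
      = (3 : R) • ∑ a, structureBivector f x a * structureBivector f x a := by
  have hT : ∀ a, structureTrivector f x * x a
      = (3 : R) • structureBivector f x a - x a * structureTrivector f x := fun a =>
    eq_sub_of_add_eq' (mul_structureTrivector_add_structureTrivector_mul f hx hf₁ hf₂ a)
  have hcomm : ∀ a, structureTrivector f x * structureBivector f x a
      = structureBivector f x a * structureTrivector f x := fun a => by
    rw [eq_comm, ← sub_eq_zero, ← Ring.lie_def,
      lie_structureBivector_structureTrivector f hx hf₂ hjac]
  have h : structureTrivector f x * structureTrivector f x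
      = (3 : R) • ∑ a, structureBivector f x a * structureBivector f x a
        - structureTrivector f x * structureTrivector f x := by
    conv_lhs => arg 2; rw [← sum_mul_structureBivector]
    simp only [mul_sum, ← mul_assoc, hT, sub_mul, smul_mul_assoc, sum_sub_distrib, ← smul_sum]
    simp only [mul_assoc, hcomm]
    simp only [← mul_assoc, ← sum_mul, sum_mul_structureBivector]
  rw [two_smul, eq_sub_iff_add_eq.mp h]

theorem sum_smul_mul_structureBivector_mul (hf₁ : ∀ a b c, f b a c = -f a b c)
    (hf₂ : ∀ a b c, f a c b = -f a b c) :
    ∑ p, ∑ q, ∑ r, f p q r • (x p * structureBivector f x q * x r)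
      = -∑ q, structureBivector f x q * structureBivector f x q
        - (∑ p, ∑ q, ∑ r, f p q r ^ 2) • (1 : A) := by
  have hxB : ∀ p q, x p * structureBivector f x q
      = structureBivector f x q * x p - (2 : R) • ∑ c, f p q c • x c := by
    intro p q
    have h := lie_structureBivector f hx hf₂ q p
    simp only [Ring.lie_def, hf₁ p q, neg_smul, sum_neg_distrib] at h
    calc x p * structureBivector f x q
        = structureBivector f x q * x p
          - (structureBivector f x q * x p - x p * structureBivector f x q) := by abel
      _ = _ := by
        rw [h]
        module
  have hxv : ∀ q, ∑ p, x p * ∑ c, f p q c • x c = -structureBivector f x q := by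
    intro q
    simp only [structureBivector, mul_sum, mul_smul_comm, hf₁ q, neg_smul, sum_neg_distrib,
      mul_neg]
  calc ∑ p, ∑ q, ∑ r, f p q r • (x p * structureBivector f x q * x r)
      = ∑ p, ∑ q, x p * structureBivector f x q * ∑ r, f p q r • x r := by
        simp only [mul_sum, mul_smul_comm]
    _ = ∑ q, structureBivector f x q * ∑ p, x p * ∑ c, f p q c • x c
        - ∑ p, ∑ q, (2 : R) • ((∑ r, f p q r • x r) * ∑ r, f p q r • x r) := by
        simp only [hxB, sub_mul, sum_sub_distrib, mul_assoc, smul_mul_assoc]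
        rw [sum_comm]
        simp only [← mul_sum]
    _ = _ := by
        simp only [hxv, two_smul_sum_smul_mul_self hx, mul_neg, sum_neg_distrib, sum_smul]

theorem two_smul_structureTrivector_mul_self_eq_nine_smul_add (hf₁ : ∀ a b c, f b a c = -f a b c)
    (hf₂ : ∀ a b c, f a c b = -f a b c) :
    (2 : R) • (structureTrivector f x * structureTrivector f x)
      = (9 : R) • ∑ a, structureBivector f x a * structureBivector f x a
        + (3 * ∑ a, ∑ b, ∑ c, f a b c ^ 2) • (1 : A) := by
  have hodd : ∀ p q r, structureTrivector f x * (x p * x q * x r)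
      + x p * x q * x r * structureTrivector f x
      = (3 : R) • (structureBivector f x p * x q * x r)
        - (3 : R) • (x p * structureBivector f x q * x r)
        + (3 : R) • (x p * x q * structureBivector f x r) := by
    intro p q r
    calc _ = (x p * structureTrivector f x + structureTrivector f x * x p) * x q * x r
          - x p * (x q * structureTrivector f x + structureTrivector f x * x q) * x r
          + x p * x q * (x r * structureTrivector f x + structureTrivector f x * x r) := by
          noncomm_ring
      _ = _ := by
          simp only [mul_structureTrivector_add_structureTrivector_mul f hx hf₁ hf₂,
            smul_mul_assoc, mul_smul_comm]
  have hleft : ∑ p, ∑ q, ∑ r, f p q r • (structureBivector f x p * x q * x r)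
      = ∑ p, structureBivector f x p * structureBivector f x p := by
    simp only [structureBivector, mul_sum, mul_smul_comm, mul_assoc]
  have hright : ∑ p, ∑ q, ∑ r, f p q r • (x p * x q * structureBivector f x r)
      = ∑ r, structureBivector f x r * structureBivector f x r := by
    rw [sum_comm_cycle]
    refine sum_congr rfl fun r _ => ?_
    conv_rhs => arg 1; rw [structureBivector]
    simp only [sum_mul, smul_mul_assoc, cyclic_of_antisymm hf₁ hf₂ r]
  have hsplit : structureTrivector f x * structureTrivector f x
      + structureTrivector f x * structureTrivector f x
      = ∑ p, ∑ q, ∑ r, f p q r • (structureTrivector f x * (x p * x q * x r)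
        + x p * x q * x r * structureTrivector f x) := by
    conv_lhs => arg 1; arg 2; rw [structureTrivector]
    conv_lhs => arg 2; arg 1; rw [structureTrivector]
    simp only [mul_sum, sum_mul, mul_smul_comm, smul_mul_assoc, ← sum_add_distrib, smul_add]
  rw [two_smul, hsplit]
  simp only [hodd, smul_add, smul_sub, sum_add_distrib, sum_sub_distrib,
    smul_comm (f _ _ _) (3 : R), ← smul_sum, hleft, hright,
    sum_smul_mul_structureBivector_mul f hx hf₁ hf₂]
  module

theorem four_smul_structureTrivector_mul_self (hf₁ : ∀ a b c, f b a c = -f a b c)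
    (hf₂ : ∀ a b c, f a c b = -f a b c)
    (hjac : ∀ a b c d, ∑ k, f b c k * f a k d = ∑ k, (f a b k * f k c d + f a c k * f b k d)) :
    (4 : R) • (structureTrivector f x * structureTrivector f x)
      = -(3 * ∑ a, ∑ b, ∑ c, f a b c ^ 2) • (1 : A) := by
  have h₁ := two_smul_structureTrivector_mul_self_eq_three_smul f hx hf₁ hf₂ hjac
  have h₂ := two_smul_structureTrivector_mul_self_eq_nine_smul_add f hx hf₁ hf₂
  linear_combination (norm := module) (3 : R) • h₁ - h₂

end Clifford

section TensorProduct

open TensorProduct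

variable {R B C ι : Type*} [CommRing R] [Ring B] [Algebra R B] [Ring C] [Algebra R C]
  [Fintype ι] [DecidableEq ι] (f : ι → ι → ι → R) {u : ι → B} {x : ι → C}

theorem sum_tmul_mul_one_tmul_structureTrivector_add
    (hx : ∀ a b, x a * x b + x b * x a = if a = b then 1 else 0)
    (hf₁ : ∀ a b c, f b a c = -f a b c) (hf₂ : ∀ a b c, f a c b = -f a b c) :
    (∑ a, u a ⊗ₜ[R] x a) * (1 ⊗ₜ[R] structureTrivector f x)
      + (1 ⊗ₜ[R] structureTrivector f x) * ∑ a, u a ⊗ₜ[R] x a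
      = (3 : R) • ∑ a, u a ⊗ₜ[R] structureBivector f x a := by
  simp only [sum_mul, mul_sum, Algebra.TensorProduct.tmul_mul_tmul, mul_one, one_mul,
    ← sum_add_distrib, ← tmul_add, mul_structureTrivector_add_structureTrivector_mul f hx hf₁ hf₂,
    tmul_smul, smul_sum]

theorem two_smul_sum_tmul_mul_self (hu : ∀ a b, ⁅u a, u b⁆ = ∑ c, f a b c • u c)
    (hx : ∀ a b, x a * x b + x b * x a = if a = b then 1 else 0)
    (hf₁ : ∀ a b c, f b a c = -f a b c) (hf₂ : ∀ a b c, f a c b = -f a b c) :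
    (2 : R) • ((∑ a, u a ⊗ₜ[R] x a) * ∑ a, u a ⊗ₜ[R] x a)
      = ∑ a, (u a * u a) ⊗ₜ[R] (1 : C) + ∑ a, u a ⊗ₜ[R] structureBivector f x a := by
  have hterm : ∀ a b, (u b * u a) ⊗ₜ[R] (x b * x a) + (u a * u b) ⊗ₜ[R] (x a * x b)
      = ⁅u a, u b⁆ ⊗ₜ[R] (x a * x b) + (u b * u a) ⊗ₜ[R] (x a * x b + x b * x a) := by
    intro a b
    rw [Ring.lie_def, sub_tmul, tmul_add]
    abel
  have hbiv : ∑ b, ∑ a, ∑ c, f a b c • (u c ⊗ₜ[R] (x a * x b))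
      = ∑ c, u c ⊗ₜ[R] structureBivector f x c := by
    rw [sum_comm, sum_comm_cycle]
    refine sum_congr rfl fun c _ => ?_
    simp only [structureBivector, tmul_sum, tmul_smul, cyclic_of_antisymm hf₁ hf₂ c]
  rw [sum_mul_sum, two_smul]
  conv_lhs => arg 2; rw [sum_comm]
  simp only [Algebra.TensorProduct.tmul_mul_tmul, ← sum_add_distrib]
  simp only [hterm, hu, hx, sum_tmul, ← smul_tmul',
    tmul_ite, sum_add_distrib, sum_ite_eq', mem_univ, if_true, hbiv]
  rw [add_comm]

end TensorProduct

open TensorProduct in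
theorem dirac_mul_self {K B C ι : Type*} [Field K] [CharZero K] [Ring B] [Algebra K B] [Ring C]
    [Algebra K C] [Fintype ι] [DecidableEq ι] (f : ι → ι → ι → K) {u : ι → B} {x : ι → C}
    (hu : ∀ a b, ⁅u a, u b⁆ = ∑ c, f a b c • u c)
    (hx : ∀ a b, x a * x b + x b * x a = if a = b then 1 else 0)
    (hf₁ : ∀ a b c, f b a c = -f a b c) (hf₂ : ∀ a b c, f a c b = -f a b c)
    (hjac : ∀ a b c d, ∑ k, f b c k * f a k d = ∑ k, (f a b k * f k c d + f a c k * f b k d)) :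
    (∑ a, u a ⊗ₜ[K] x a + 1 ⊗ₜ[K] ((-(1 / 6 : K)) • structureTrivector f x))
        * (∑ a, u a ⊗ₜ[K] x a + 1 ⊗ₜ[K] ((-(1 / 6 : K)) • structureTrivector f x))
      = (1 / 2 : K) • ∑ a, (u a * u a) ⊗ₜ[K] (1 : C)
        - ((1 / 48 : K) * ∑ a, ∑ b, ∑ c, f a b c ^ 2) • (1 : B ⊗[K] C) := by
  have hsq := two_smul_sum_tmul_mul_self f hu hx hf₁ hf₂
  have hcross := sum_tmul_mul_one_tmul_structureTrivector_add (u := u) f hx hf₁ hf₂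
  have hcubic := congrArg ((1 : B) ⊗ₜ[K] ·)
    (four_smul_structureTrivector_mul_self f hx hf₁ hf₂ hjac)
  simp only [tmul_smul, ← Algebra.TensorProduct.one_def] at hcubic
  have hexpand : ∀ (P : B ⊗[K] C) (y : C) (c : K), (P + 1 ⊗ₜ[K] (c • y)) * (P + 1 ⊗ₜ[K] (c • y))
      = P * P + c • (P * (1 ⊗ₜ[K] y) + (1 ⊗ₜ[K] y) * P) + (c * c) • ((1 : B) ⊗ₜ[K] (y * y)) := by
    intro P y c
    simp only [tmul_smul, add_mul, mul_add, smul_mul_assoc, mul_smul_comm,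
      Algebra.TensorProduct.tmul_mul_tmul, mul_one]
    module
  rw [hexpand]
  linear_combination (norm := module) (1 / 2 : K) • hsq + (-(1 / 6 : K)) • hcross
    + (1 / 144 : K) • hcubic

section LieAlgebra

variable {K g ι : Type*} [CommRing K] [LieRing g] [LieAlgebra K g] [Fintype ι] [DecidableEq ι]
  {ip : LinearMap.BilinForm K g} {e : Module.Basis ι K g} {f : ι → ι → ι → K}

theorem sum_bilin_smul_of_orthonormal (he : ∀ a b, ip (e a) (e b) = if a = b then 1 else 0)
    (v : g) : ∑ c, ip v (e c) • e c = v := by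
  have hcoord : ∀ c, ip v (e c) = e.repr v c := fun c => by
    conv_lhs => rw [← e.sum_repr v]
    simp only [map_sum, map_smul, LinearMap.sum_apply, LinearMap.smul_apply, he, smul_eq_mul,
      mul_ite, mul_one, mul_zero, sum_ite_eq', mem_univ, if_true]
  simp only [hcoord, e.sum_repr]

theorem lie_basis_eq_sum (he : ∀ a b, ip (e a) (e b) = if a = b then 1 else 0)
    (hf : ∀ a b c, f a b c = ip ⁅e a, e b⁆ (e c)) (a b : ι) :
    ⁅e a, e b⁆ = ∑ c, f a b c • e c := by
  simp only [hf]
  exact (sum_bilin_smul_of_orthonormal he _).symm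

theorem jacobi_structureConstants (he : ∀ a b, ip (e a) (e b) = if a = b then 1 else 0)
    (hf : ∀ a b c, f a b c = ip ⁅e a, e b⁆ (e c)) (a b c d : ι) :
    ∑ k, f b c k * f a k d = ∑ k, (f a b k * f k c d + f a c k * f b k d) := by
  calc ∑ k, f b c k * f a k d = ip ⁅e a, ⁅e b, e c⁆⁆ (e d) := by
        rw [lie_basis_eq_sum he hf b c]
        simp only [lie_sum, lie_smul, map_sum, map_smul, LinearMap.sum_apply, LinearMap.smul_apply,
          smul_eq_mul, hf]
    _ = ip ⁅⁅e a, e b⁆, e c⁆ (e d) + ip ⁅e b, ⁅e a, e c⁆⁆ (e d) := by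
        rw [leibniz_lie, map_add, LinearMap.add_apply]
    _ = ∑ k, (f a b k * f k c d + f a c k * f b k d) := by
        rw [lie_basis_eq_sum he hf a b, lie_basis_eq_sum he hf a c]
        simp only [sum_lie, smul_lie, lie_sum, lie_smul, map_sum, map_smul, LinearMap.sum_apply,
          LinearMap.smul_apply, smul_eq_mul, hf, sum_add_distrib]

theorem UniversalEnvelopingAlgebra.lie_ι_basis (he : ∀ a b, ip (e a) (e b) = if a = b then 1 else 0)
    (hf : ∀ a b c, f a b c = ip ⁅e a, e b⁆ (e c)) (a b : ι) :
    ⁅UniversalEnvelopingAlgebra.ι K (e a), UniversalEnvelopingAlgebra.ι K (e b)⁆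
      = ∑ c, f a b c • UniversalEnvelopingAlgebra.ι K (e c) := by
  rw [← LieHom.map_lie, lie_basis_eq_sum he hf, map_sum]
  simp only [map_smul]

end LieAlgebra

end

theorem CliffordAlgebra.ι_mul_ι_add_swap_of_orthonormal_s6 {K M ι : Type*} [Field K] [NeZero (2 : K)]
    [AddCommGroup M] [Module K M] [DecidableEq ι] {ip : LinearMap.BilinForm K M}
    (ip_symm : ∀ v w, ip v w = ip w v) {Q : QuadraticForm K M}
    (hQ : ∀ v, Q v = (1 / 2 : K) * ip v v)
    {e : ι → M} (he : ∀ a b, ip (e a) (e b) = if a = b then 1 else 0) (a b : ι) :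
    CliffordAlgebra.ι Q (e a) * CliffordAlgebra.ι Q (e b)
      + CliffordAlgebra.ι Q (e b) * CliffordAlgebra.ι Q (e a) = if a = b then 1 else 0 := by
  have hpolar : QuadraticMap.polar Q (e a) (e b) = ip (e a) (e b) := by
    simp only [QuadraticMap.polar, hQ, map_add, LinearMap.add_apply, ip_symm (e b) (e a)]
    field_simp
    ring
  rw [ι_mul_ι_add_swap, hpolar, he]
  split_ifs <;> simp

/-- In `𝒲 = U(𝔤) ⊗ Cl(𝔤)`, the Dirac element `𝔇 = ∑ u_a ⊗ x_a + 1 ⊗ γ`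
satisfies `𝔇² = ½ ∑ (u_a u_a) ⊗ 1 − (1/48)(∑ f_{abc}²)·(1 ⊗ 1)`. -/
theorem dirac_square
    {n : ℕ} {g : Type*} [LieRing g] [LieAlgebra ℝ g]
    -- the ad-invariant inner product, as a symmetric bilinear form
    (ip : LinearMap.BilinForm ℝ g)
    (ip_symm : ∀ v w : g, ip v w = ip w v)
    (ip_inv : ∀ v w z : g, ip ⁅v, w⁆ z + ip w ⁅v, z⁆ = 0)
    -- an orthonormal basis
    (e : Module.Basis (Fin n) ℝ g)
    (he : ∀ a b, ip (e a) (e b) = if a = b then (1 : ℝ) else 0)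
    -- the quadratic form Q(v) = ½⟨v,v⟩ and its Clifford algebra
    (Q : QuadraticForm ℝ g)
    (hQ : ∀ v, Q v = (1 / 2 : ℝ) * ip v v)
    -- structure constants
    (f : Fin n → Fin n → Fin n → ℝ)
    (hf : ∀ a b c, f a b c = ip ⁅e a, e b⁆ (e c))
    -- the Clifford generators
    (x : Fin n → CliffordAlgebra Q)
    (hx : ∀ a, x a = CliffordAlgebra.ι Q (e a))
    -- the element γ
    (γ : CliffordAlgebra Q)
    (hγ : γ = (-(1 / 6 : ℝ)) • ∑ a, ∑ b, ∑ c, f a b c • (x a * x b * x c))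
    -- the generators of the universal enveloping algebra
    (u : Fin n → UniversalEnvelopingAlgebra ℝ g)
    (hu : ∀ a, u a = UniversalEnvelopingAlgebra.ι ℝ (e a))
    -- the Dirac element 𝔇 in 𝒲 = U(𝔤) ⊗ Cl(𝔤)
    (D : UniversalEnvelopingAlgebra ℝ g ⊗[ℝ] CliffordAlgebra Q)
    (hD : D = ∑ a, u a ⊗ₜ[ℝ] x a + 1 ⊗ₜ[ℝ] γ)
    :
    D * D = (1 / 2 : ℝ) • ∑ a, (u a * u a) ⊗ₜ[ℝ] (1 : CliffordAlgebra Q)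
      - ((1 / 48 : ℝ) * ∑ a, ∑ b, ∑ c, (f a b c) ^ 2) •
        (1 : UniversalEnvelopingAlgebra ℝ g ⊗[ℝ] CliffordAlgebra Q) := by
  have hf₁ : ∀ a b c, f b a c = -f a b c := fun a b c => by
    rw [hf, hf, ← lie_skew, map_neg, LinearMap.neg_apply]
  have hf₂ : ∀ a b c, f a c b = -f a b c := fun a b c => by
    rw [hf, hf, ip_symm]
    exact eq_neg_of_add_eq_zero_right (ip_inv _ _ _)
  obtain rfl : x = fun a => CliffordAlgebra.ι Q (e a) := funext hx
  obtain rfl : u = fun a => UniversalEnvelopingAlgebra.ι ℝ (e a) := funext hu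
  subst hD hγ
  exact dirac_mul_self f (UniversalEnvelopingAlgebra.lie_ι_basis he hf)
    (CliffordAlgebra.ι_mul_ι_add_swap_of_orthonormal_s6 ip_symm hQ he) hf₁ hf₂
    (jacobi_structureConstants he hf)
end

section
/- In 𝒲 = U(𝔤) ⊗ Cl(𝔤), for every index a one has the anticommutator identity (1 ⊗ x_a)·𝔇 + 𝔇·(1 ⊗ x_a) = u_a ⊗ 1 + 1 ⊗ g_a. -/
/-!
Anticommuting `1 ⊗ x_a` with `u_b ⊗ x_b` only touches the Clifford factor, and the Clifford
relations `x_r x_s + x_s x_r = δ_{rs}` collapse `∑_b u_b ⊗ (x_a x_b + x_b x_a)` to `u_a ⊗ 1`.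
For `γ`, the anticommutator of `x_a` with a cubic monomial `x_b x_c x_d` is the alternating sum
of the three quadratic monomials obtained by contracting `a` against `b`, `c` or `d`; the total
antisymmetry of `f_{abc}` (skew-symmetry of the bracket plus ad-invariance of `⟨·,·⟩`) makes the
three contractions of `γ` equal, so `x_a γ + γ x_a = -½ ∑ f_{ars} x_r x_s = g_a`.
-/

open scoped TensorProduct

theorem anticomm_mul_mul_mul {A : Type*} [Ring A] (a b c d : A) :
    a * (b * c * d) + b * c * d * a =
      (a * b + b * a) * c * d - b * (a * c + c * a) * d + b * c * (a * d + d * a) := by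
  noncomm_ring

section StructureConstants

variable {R L : Type*} [CommRing R] [LieRing L] [LieAlgebra R L]

theorem LinearMap.BilinForm.lie_apply_swap (B : LinearMap.BilinForm R L) (v w z : L) :
    B ⁅w, v⁆ z = -B ⁅v, w⁆ z := by
  rw [← lie_skew v w, map_neg, LinearMap.neg_apply, neg_neg]

theorem LinearMap.BilinForm.lie_apply_cycle (B : LinearMap.BilinForm R L)
    (hsymm : ∀ v w, B v w = B w v) (hinv : ∀ v w z : L, B ⁅v, w⁆ z + B w ⁅v, z⁆ = 0)
    (v w z : L) :
    B ⁅w, z⁆ v = B ⁅v, w⁆ z := by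
  have h := hinv w v z
  rw [hsymm v, B.lie_apply_swap] at h
  linear_combination h

end StructureConstants

theorem QuadraticMap.polar_eq_of_eq_half_mul_self {R M : Type*} [Field R] [CharZero R]
    [AddCommGroup M] [Module R M] (Q : QuadraticForm R M) (B : LinearMap.BilinForm R M)
    (hsymm : ∀ v w, B v w = B w v) (hQ : ∀ v, Q v = (1 / 2 : R) * B v v) (v w : M) :
    QuadraticMap.polar Q v w = B v w := by
  simp only [QuadraticMap.polar, hQ, map_add, LinearMap.add_apply, hsymm w v]
  ring

theorem CliffordAlgebra.ι_mul_ι_add_swap_of_polar_eq_ite {R M I : Type*} [CommRing R]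
    [AddCommGroup M] [Module R M] [DecidableEq I] {Q : QuadraticForm R M} {e : I → M}
    (he : ∀ r s, QuadraticMap.polar Q (e r) (e s) = if r = s then 1 else 0) (r s : I) :
    ι Q (e r) * ι Q (e s) + ι Q (e s) * ι Q (e r) = if r = s then 1 else 0 := by
  rw [ι_mul_ι_add_swap, he]
  split_ifs <;> simp

section CliffordRelations

variable {R A ι : Type*} [CommRing R] [Ring A] [Algebra R A] [DecidableEq ι]
  {x : ι → A}

theorem anticomm_cubic (hx : ∀ r s, x r * x s + x s * x r = if r = s then 1 else 0)
    (a b c d : ι) :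
    x a * (x b * x c * x d) + x b * x c * x d * x a =
      (if a = b then x c * x d else 0) - (if a = c then x b * x d else 0) +
        (if a = d then x b * x c else 0) := by
  rw [anticomm_mul_mul_mul, hx, hx, hx]
  split_ifs <;> simp

theorem anticomm_sum_cubic [Fintype ι]
    (hx : ∀ r s, x r * x s + x s * x r = if r = s then 1 else 0)
    (f : ι → ι → ι → R) (hskew : ∀ p q r, f q p r = -f p q r)
    (hcycle : ∀ p q r, f q r p = f p q r) (a : ι) :
    x a * (∑ b, ∑ c, ∑ d, f b c d • (x b * x c * x d)) +
        (∑ b, ∑ c, ∑ d, f b c d • (x b * x c * x d)) * x a =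
      (3 : R) • ∑ r, ∑ s, f a r s • (x r * x s) := by
  simp only [Finset.mul_sum, Finset.sum_mul, mul_smul_comm, smul_mul_assoc,
    ← Finset.sum_add_distrib, ← smul_add, anticomm_cubic hx]
  simp only [smul_add, smul_sub, smul_ite, smul_zero, Finset.sum_add_distrib,
    Finset.sum_sub_distrib, Finset.sum_ite_irrel, Finset.sum_const_zero, Finset.sum_ite_eq,
    Finset.mem_univ, if_true, hskew a, hcycle a, neg_smul, Finset.sum_neg_distrib]
  module

end CliffordRelations

section TensorProduct

variable {R A B ι : Type*} [CommRing R] [Ring A] [Ring B] [Algebra R A] [Algebra R B]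

theorem Algebra.TensorProduct.one_tmul_mul_add_mul_one_tmul (y : B) (p : A) (q : B) :
    (1 ⊗ₜ[R] y) * (p ⊗ₜ q) + (p ⊗ₜ q) * (1 ⊗ₜ y) = p ⊗ₜ (y * q + q * y) := by
  rw [tmul_mul_tmul, tmul_mul_tmul, one_mul, mul_one, TensorProduct.tmul_add]

theorem Algebra.TensorProduct.one_tmul_mul_add_mul_one_tmul_sum [Fintype ι] (y : B)
    (p : ι → A) (q : ι → B) :
    (1 ⊗ₜ[R] y) * (∑ i, p i ⊗ₜ q i) + (∑ i, p i ⊗ₜ q i) * (1 ⊗ₜ y) =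
      ∑ i, p i ⊗ₜ (y * q i + q i * y) := by
  simp only [Finset.mul_sum, Finset.sum_mul, ← Finset.sum_add_distrib,
    one_tmul_mul_add_mul_one_tmul]

end TensorProduct

theorem dirac_anticommutator_generator_general
    {n : ℕ} {g : Type*} [LieRing g] [LieAlgebra ℝ g]
    -- the ad-invariant inner product, as a symmetric bilinear form
    (ip : LinearMap.BilinForm ℝ g)
    (ip_symm : ∀ v w : g, ip v w = ip w v)
    (ip_inv : ∀ v w z : g, ip ⁅v, w⁆ z + ip w ⁅v, z⁆ = 0)
    -- an orthonormal basis
    (e : Module.Basis (Fin n) ℝ g)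
    (he : ∀ a b, ip (e a) (e b) = if a = b then (1 : ℝ) else 0)
    -- the quadratic form Q(v) = ½⟨v,v⟩ and its Clifford algebra
    (Q : QuadraticForm ℝ g)
    (hQ : ∀ v, Q v = (1 / 2 : ℝ) * ip v v)
    -- structure constants
    (f : Fin n → Fin n → Fin n → ℝ)
    (hf : ∀ a b c, f a b c = ip ⁅e a, e b⁆ (e c))
    -- the Clifford generators
    (x : Fin n → CliffordAlgebra Q)
    (hx : ∀ a, x a = CliffordAlgebra.ι Q (e a))
    -- the elements g_a = -½ ∑ f_{ars} x_r x_s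
    (gc : Fin n → CliffordAlgebra Q)
    (hgc : ∀ a, gc a = (-(1 / 2 : ℝ)) • ∑ r, ∑ s, f a r s • (x r * x s))
    -- the element γ
    (γ : CliffordAlgebra Q)
    (hγ : γ = (-(1 / 6 : ℝ)) • ∑ a, ∑ b, ∑ c, f a b c • (x a * x b * x c))
    -- the generators of the universal enveloping algebra
    (u : Fin n → UniversalEnvelopingAlgebra ℝ g)
    -- the Dirac element 𝔇 in 𝒲 = U(𝔤) ⊗ Cl(𝔤)
    (D : UniversalEnvelopingAlgebra ℝ g ⊗[ℝ] CliffordAlgebra Q)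
    (hD : D = ∑ a, u a ⊗ₜ[ℝ] x a + 1 ⊗ₜ[ℝ] γ)
    :
    ∀ a, (1 ⊗ₜ[ℝ] x a) * D + D * (1 ⊗ₜ[ℝ] x a)
      = u a ⊗ₜ[ℝ] (1 : CliffordAlgebra Q) + 1 ⊗ₜ[ℝ] gc a := by
  intro a
  have hskew : ∀ p q r, f q p r = -f p q r := fun p q r => by
    simp only [hf]
    exact ip.lie_apply_swap _ _ _
  have hcycle : ∀ p q r, f q r p = f p q r := fun p q r => by
    simp only [hf]
    exact ip.lie_apply_cycle ip_symm ip_inv _ _ _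
  have hpolar : ∀ r s, QuadraticMap.polar Q (e r) (e s) = if r = s then 1 else 0 :=
    fun r s => by rw [QuadraticMap.polar_eq_of_eq_half_mul_self Q ip ip_symm hQ, he]
  have hxx : ∀ r s, x r * x s + x s * x r = if r = s then 1 else 0 := fun r s => by
    rw [hx, hx]
    exact CliffordAlgebra.ι_mul_ι_add_swap_of_polar_eq_ite hpolar r s
  have hγa : x a * γ + γ * x a = gc a := by
    rw [hγ, hgc, mul_smul_comm, smul_mul_assoc, ← smul_add,
      anticomm_sum_cubic hxx f hskew hcycle a, smul_smul]
    norm_num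
  rw [hD, mul_add, add_mul, add_add_add_comm,
    Algebra.TensorProduct.one_tmul_mul_add_mul_one_tmul_sum,
    Algebra.TensorProduct.one_tmul_mul_add_mul_one_tmul, hγa]
  simp [hxx, TensorProduct.tmul_ite]

/-- In `𝒲 = U(𝔤) ⊗ Cl(𝔤)`, for every index `a`:
`(1 ⊗ x_a)·𝔇 + 𝔇·(1 ⊗ x_a) = u_a ⊗ 1 + 1 ⊗ g_a`. -/
theorem dirac_anticommutator_generator
    {n : ℕ} {g : Type*} [LieRing g] [LieAlgebra ℝ g]
    -- the ad-invariant inner product, as a symmetric bilinear form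
    (ip : LinearMap.BilinForm ℝ g)
    (ip_symm : ∀ v w : g, ip v w = ip w v)
    (ip_inv : ∀ v w z : g, ip ⁅v, w⁆ z + ip w ⁅v, z⁆ = 0)
    -- an orthonormal basis
    (e : Module.Basis (Fin n) ℝ g)
    (he : ∀ a b, ip (e a) (e b) = if a = b then (1 : ℝ) else 0)
    -- the quadratic form Q(v) = ½⟨v,v⟩ and its Clifford algebra
    (Q : QuadraticForm ℝ g)
    (hQ : ∀ v, Q v = (1 / 2 : ℝ) * ip v v)
    -- structure constants
    (f : Fin n → Fin n → Fin n → ℝ)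
    (hf : ∀ a b c, f a b c = ip ⁅e a, e b⁆ (e c))
    -- the Clifford generators
    (x : Fin n → CliffordAlgebra Q)
    (hx : ∀ a, x a = CliffordAlgebra.ι Q (e a))
    -- the elements g_a = -½ ∑ f_{ars} x_r x_s
    (gc : Fin n → CliffordAlgebra Q)
    (hgc : ∀ a, gc a = (-(1 / 2 : ℝ)) • ∑ r, ∑ s, f a r s • (x r * x s))
    -- the element γ
    (γ : CliffordAlgebra Q)
    (hγ : γ = (-(1 / 6 : ℝ)) • ∑ a, ∑ b, ∑ c, f a b c • (x a * x b * x c))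
    -- the generators of the universal enveloping algebra
    (u : Fin n → UniversalEnvelopingAlgebra ℝ g)
    (hu : ∀ a, u a = UniversalEnvelopingAlgebra.ι ℝ (e a))
    -- the Dirac element 𝔇 in 𝒲 = U(𝔤) ⊗ Cl(𝔤)
    (D : UniversalEnvelopingAlgebra ℝ g ⊗[ℝ] CliffordAlgebra Q)
    (hD : D = ∑ a, u a ⊗ₜ[ℝ] x a + 1 ⊗ₜ[ℝ] γ)
    :
    ∀ a, (1 ⊗ₜ[ℝ] x a) * D + D * (1 ⊗ₜ[ℝ] x a)
      = u a ⊗ₜ[ℝ] (1 : CliffordAlgebra Q) + 1 ⊗ₜ[ℝ] gc a :=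
  dirac_anticommutator_generator_general ip ip_symm ip_inv e he Q hQ f hf x hx gc hgc γ hγ u D hD
end
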